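/- arXiv:1006.3883 — 3 statements merged into one kernel-verified Lean document; each statement's English description precedes it below -/
import Mathlib

section
/- Let F = F_x ∪ F_y where F_x is a monotone lattice path from (i,j) to (m,n) and F_y is a pair of non-intersecting monotone lattice paths from (1,1) to (i,n) and from (2,1) to (m,j), all in an m×n grid with (i,j) ≠ (m,n). Then the total number of vertices |F_x| + |F_y| equals 2(m+n) - 2, independently of the choice of (i,j) and of the paths. -/
/-- A single step in a monotone lattice path: one unit down or one unit right. -/
def IsStep (p q : ℕ × ℕ) : Prop := q = (p.1 + 1, p.2) ∨ q = (p.1, p.2 + 1)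

/-- `L` is a monotone lattice path from `(a,b)` to `(c,d)`. -/
def IsPath (a b c d : ℕ) (L : List (ℕ × ℕ)) : Prop :=
  L ≠ [] ∧ L.head? = some (a, b) ∧ L.getLast? = some (c, d) ∧ L.Chain' IsStep

/-!
Each step of a monotone lattice path raises the coordinate sum `x + y` by exactly one. Hence a
path from `(a,b)` to `(c,d)` visits pairwise distinct vertices, and `(c + d) - (a + b) + 1` of
them. Adding the three counts, the coordinate sums of the free endpoint `(i,j)` cancel.
-/

theorem IsStep.fst_add_snd {p q : ℕ × ℕ} (h : IsStep p q) : q.1 + q.2 = p.1 + p.2 + 1 := by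
  rcases h with rfl | rfl <;> dsimp only <;> omega

theorem List.IsChain.nodup_of_isStep {L : List (ℕ × ℕ)} (h : L.IsChain IsStep) : L.Nodup := by
  have hlt : (L.map fun p => p.1 + p.2).IsChain (· < ·) :=
    List.isChain_map_of_isChain _ (fun _ _ hs => by rw [hs.fst_add_snd]; omega) h
  exact hlt.pairwise.nodup.of_map _

theorem List.IsChain.getLast?_fst_add_snd_of_isStep :
    ∀ {x y : ℕ × ℕ} {t : List (ℕ × ℕ)}, (x :: t).IsChain IsStep → (x :: t).getLast? = some y →
      y.1 + y.2 = x.1 + x.2 + t.length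
  | x, y, [], _, hl => by simp_all
  | x, y, z :: t, hc, hl => by
    rw [List.isChain_cons_cons] at hc
    rw [List.getLast?_cons_cons] at hl
    rw [hc.2.getLast?_fst_add_snd_of_isStep hl, hc.1.fst_add_snd, List.length_cons]
    omega

theorem IsPath.length_eq {a b c d : ℕ} {L : List (ℕ × ℕ)} (h : IsPath a b c d L) :
    a + b + L.length = c + d + 1 := by
  obtain ⟨hne, hhead, hlast, hchain⟩ := h
  obtain ⟨x, t, rfl⟩ := List.exists_cons_of_ne_nil hne
  obtain rfl : x = (a, b) := by simpa using hhead
  have := List.IsChain.getLast?_fst_add_snd_of_isStep hchain hlast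
  simp only [List.length_cons] at this ⊢
  omega

theorem IsPath.card_toFinset {a b c d : ℕ} {L : List (ℕ × ℕ)} (h : IsPath a b c d L) :
    a + b + L.toFinset.card = c + d + 1 := by
  rw [List.toFinset_card_of_nodup h.2.2.2.nodup_of_isStep, h.length_eq]

theorem facet_vertex_count_general (m n i j : ℕ) (Lx P Q : List (ℕ × ℕ))
    (hLx : IsPath i j m n Lx)
    (hP : IsPath 1 1 i n P) (hQ : IsPath 2 1 m j Q) :
    Lx.toFinset.card + (P.toFinset.card + Q.toFinset.card) = 2 * (m + n) - 2 := by
  have hx := hLx.card_toFinset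
  have hp := hP.card_toFinset
  have hq := hQ.card_toFinset
  omega

theorem facet_vertex_count (m n i j : ℕ) (Lx P Q : List (ℕ × ℕ))
    (hne : (i, j) ≠ (m, n))
    (hLx : IsPath i j m n Lx)
    (hP : IsPath 1 1 i n P) (hQ : IsPath 2 1 m j Q)
    (hdisj : ∀ v ∈ P, v ∉ Q) :
    Lx.toFinset.card + (P.toFinset.card + Q.toFinset.card) = 2 * (m + n) - 2 :=
  facet_vertex_count_general m n i j Lx P Q hLx hP hQ
end

section
/- Let F = F_x ∪ F_y where F_x is a monotone lattice path from (i,j) to (m,n) (x-vertices) and F_y is a pair of non-intersecting monotone lattice paths from (1,1) to (i,n) and from (2,1) to (m,j) (y-vertices), with (i,j) ≠ (m,n). Then the squarefree monomial corresponding to F is not divisible by any element of the families A, B, C, D, E. That is, F is a face of Δ_{LT(J)}. -/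
/-- Vertices of the complex: `(true, i, j)` is `x_{i,j}`, `(false, i, j)` is `y_{i,j}`. -/
abbrev V : Type := Bool × ℕ × ℕ

def InGrid (m n : ℕ) (v : V) : Prop :=
  1 ≤ v.2.1 ∧ v.2.1 ≤ m ∧ 1 ≤ v.2.2 ∧ v.2.2 ≤ n

/-- A face of `Δ_{LT(J)}`: a set of vertices in the grid whose squarefree monomial
is divisible by no element of the families A, B, C, D, E. -/
def IsFace (m n : ℕ) (F : Finset V) : Prop :=
  (∀ v ∈ F, InGrid m n v) ∧
  (∀ i j k l : ℕ, i < j → k < l → ¬((true, i, l) ∈ F ∧ (true, j, k) ∈ F)) ∧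
  (∀ i j k l : ℕ, i < j → k < l → ¬((true, i, k) ∈ F ∧ (false, j, l) ∈ F)) ∧
  (∀ i j k p q r : ℕ, i < j → j ≤ k → p < q → q < r →
      ¬((true, k, p) ∈ F ∧ (false, j, q) ∈ F ∧ (false, i, r) ∈ F)) ∧
  (∀ i j k p q r : ℕ, i < j → j < k → p < q → q ≤ r →
      ¬((true, i, r) ∈ F ∧ (false, j, q) ∈ F ∧ (false, k, p) ∈ F)) ∧
  (∀ i j k p q r : ℕ, i < j → j < k → p < q → q < r →
      ¬((false, i, r) ∈ F ∧ (false, j, q) ∈ F ∧ (false, k, p) ∈ F))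

/-- A facet: an inclusion-maximal face. -/
def IsFacet (m n : ℕ) (F : Finset V) : Prop :=
  IsFace m n F ∧ ∀ G : Finset V, IsFace m n G → F ⊆ G → F = G

/-! A monotone lattice path is a chain for the componentwise order on `ℕ × ℕ`: it lies in the
box spanned by its endpoints and contains no two points `(a, d)`, `(b, c)` with `a < b`, `c < d`.
The monomials of A, C, D, E all contain such a pair, so it suffices to see that the pair lies on
a single path. For A this is immediate, and for E it follows by pigeonhole on the two y-paths.
For B, C, D the point is that `P` ends in row `i` and `Q` in column `j`, where the x-path starts,
so `P` lies weakly above and `Q` weakly left of every x-vertex. This excludes B outright and puts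
both y-vertices of a monomial in C on `P` and of one in D on `Q`. -/

lemma IsStep.le {p q : ℕ × ℕ} (h : IsStep p q) : p ≤ q := by
  rcases h with rfl | rfl
  exacts [⟨Nat.le_succ _, le_rfl⟩, ⟨le_rfl, Nat.le_succ _⟩]

namespace IsPath

variable {a b c d : ℕ} {L : List (ℕ × ℕ)} {p q : ℕ × ℕ}

lemma pairwise_le (h : IsPath a b c d L) : L.Pairwise (· ≤ ·) :=
  List.isChain_iff_pairwise.mp (h.2.2.2.imp fun _ _ => IsStep.le)

lemma le_or_le (h : IsPath a b c d L) (hp : p ∈ L) (hq : q ∈ L) : p ≤ q ∨ q ≤ p :=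
  haveI : Std.Symm fun p q : ℕ × ℕ => p ≤ q ∨ q ≤ p := ⟨fun _ _ => Or.symm⟩
  List.Pairwise.forall_of_forall (R := fun p q : ℕ × ℕ => p ≤ q ∨ q ≤ p)
    (fun _ _ => Or.inl le_rfl) (h.pairwise_le.imp Or.inl) hp hq

lemma mem_Icc (h : IsPath a b c d L) (hp : p ∈ L) : p ∈ Set.Icc (a, b) (c, d) := by
  have hL := h.pairwise_le
  obtain ⟨hne, hhead, hlast, -⟩ := h
  rw [← List.head_eq_iff_head?_eq_some hne] at hhead
  rw [← List.getLast_eq_iff_getLast?_eq_some hne] at hlast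
  exact ⟨hhead ▸ hL.rel_head hp, hlast ▸ hL.rel_getLast hp⟩

lemma start_le_end (h : IsPath a b c d L) : (a, b) ≤ (c, d) :=
  (h.mem_Icc (List.mem_of_mem_head? h.2.1)).2

lemma notMem_of_lt_of_lt (h : IsPath a b c d L) {i j k l : ℕ} (hij : i < j) (hkl : k < l)
    (hil : (i, l) ∈ L) : (j, k) ∉ L := fun hjk => by
  have := h.le_or_le hil hjk
  simp only [Prod.mk_le_mk] at this
  omega

lemma inGrid {m n : ℕ} (h : IsPath a b c d L) (ha : 1 ≤ a) (hb : 1 ≤ b) (hc : c ≤ m) (hd : d ≤ n)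
    (hp : p ∈ L) (β : Bool) : InGrid m n (β, p) := by
  obtain ⟨⟨hap, hbp⟩, hpc, hpd⟩ := h.mem_Icc hp
  exact ⟨ha.trans hap, hpc.trans hc, hb.trans hbp, hpd.trans hd⟩

variable {e f g : ℕ} {M N : List (ℕ × ℕ)}

lemma fst_le_fst (hL : IsPath a b c d L) (hM : IsPath c e f g M)
    (hp : p ∈ L) (hq : q ∈ M) : p.1 ≤ q.1 :=
  (hL.mem_Icc hp).2.1.trans (hM.mem_Icc hq).1.1

lemma snd_le_snd (hL : IsPath a b c d L) (hM : IsPath e d f g M)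
    (hp : p ∈ L) (hq : q ∈ M) : p.2 ≤ q.2 :=
  (hL.mem_Icc hp).2.2.trans (hM.mem_Icc hq).1.2

lemma mem_left_of_snd_lt (hL : IsPath a b c d L) (hM : IsPath e d f g M) (hp : p ∈ N ∨ p ∈ L)
    (hq : q ∈ M) (hqp : q.2 < p.2) : p ∈ N :=
  hp.resolve_right fun hpL => (hL.snd_le_snd hM hpL hq).not_gt hqp

lemma mem_right_of_fst_lt (hL : IsPath a b c d L) (hM : IsPath c e f g M) (hp : p ∈ L ∨ p ∈ N)
    (hq : q ∈ M) (hqp : q.1 < p.1) : p ∈ N :=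
  hp.resolve_left fun hpL => (hL.fst_le_fst hM hpL hq).not_gt hqp

lemma not_three_antichain {h : ℕ} (hL : IsPath a b c d L) (hM : IsPath e f g h M) {i j k p q r : ℕ}
    (hij : i < j) (hjk : j < k) (hpq : p < q) (hqr : q < r)
    (hir : (i, r) ∈ L ∨ (i, r) ∈ M) (hjq : (j, q) ∈ L ∨ (j, q) ∈ M)
    (hkp : (k, p) ∈ L ∨ (k, p) ∈ M) : False := by
  rcases hir with hir | hir <;> rcases hjq with hjq | hjq
  · exact hL.notMem_of_lt_of_lt hij hqr hir hjq
  · rcases hkp with hkp | hkp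
    · exact hL.notMem_of_lt_of_lt (hij.trans hjk) (hpq.trans hqr) hir hkp
    · exact hM.notMem_of_lt_of_lt hjk hpq hjq hkp
  · rcases hkp with hkp | hkp
    · exact hL.notMem_of_lt_of_lt hjk hpq hjq hkp
    · exact hM.notMem_of_lt_of_lt (hij.trans hjk) (hpq.trans hqr) hir hkp
  · exact hM.notMem_of_lt_of_lt hij hqr hir hjq

end IsPath

section

variable {Lx P Q : List (ℕ × ℕ)} {p : ℕ × ℕ}

lemma true_mem_image_union_image_iff :
    ((true, p) : V) ∈ (Lx.toFinset.image fun p => ((true, p) : V)) ∪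
      ((P.toFinset ∪ Q.toFinset).image fun p => ((false, p) : V)) ↔ p ∈ Lx := by
  simp

lemma false_mem_image_union_image_iff :
    ((false, p) : V) ∈ (Lx.toFinset.image fun p => ((true, p) : V)) ∪
      ((P.toFinset ∪ Q.toFinset).image fun p => ((false, p) : V)) ↔ p ∈ P ∨ p ∈ Q := by
  simp

end

theorem paths_give_face_general (m n i j : ℕ)
    (Lx P Q : List (ℕ × ℕ))
    (hLx : IsPath i j m n Lx)
    (hP : IsPath 1 1 i n P) (hQ : IsPath 2 1 m j Q) :
    IsFace m n
      ((Lx.toFinset.image fun p => ((true, p) : V)) ∪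
        ((P.toFinset ∪ Q.toFinset).image fun p => ((false, p) : V))) := by
  obtain ⟨hi, -⟩ := hP.start_le_end
  obtain ⟨-, hj⟩ := hQ.start_le_end
  obtain ⟨him, hjn⟩ := hLx.start_le_end
  refine ⟨?grid, ?_⟩
  case grid =>
    rintro ⟨_ | _, p⟩ hv
    · rcases false_mem_image_union_image_iff.1 hv with hv | hv
      exacts [hP.inGrid le_rfl le_rfl him le_rfl hv _, hQ.inGrid one_le_two le_rfl le_rfl hjn hv _]
    · exact hLx.inGrid hi hj le_rfl le_rfl (true_mem_image_union_image_iff.1 hv) _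
  simp only [true_mem_image_union_image_iff, false_mem_image_union_image_iff]
  refine ⟨?A, ?B, ?C, ?D, ?E⟩
  case A => exact fun i' j' k l hij hkl ⟨h1, h2⟩ => hLx.notMem_of_lt_of_lt hij hkl h1 h2
  case B =>
    rintro i' j' k l hij hkl ⟨hx, hy | hy⟩
    · exact (hP.fst_le_fst hLx hy hx : j' ≤ i').not_gt hij
    · exact (hQ.snd_le_snd hLx hy hx : l ≤ k).not_gt hkl
  case C =>
    rintro i' j' k' p q r hij hjk hpq hqr ⟨hx, hjq, hir⟩
    exact hP.notMem_of_lt_of_lt hij hqr (hQ.mem_left_of_snd_lt hLx hir hx (hpq.trans hqr))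
      (hQ.mem_left_of_snd_lt hLx hjq hx hpq)
  case D =>
    rintro i' j' k' p q r hij hjk hpq hqr ⟨hx, hjq, hkp⟩
    exact hQ.notMem_of_lt_of_lt hjk hpq (hP.mem_right_of_fst_lt hLx hjq hx hij)
      (hP.mem_right_of_fst_lt hLx hkp hx (hij.trans hjk))
  case E =>
    rintro i' j' k' p q r hij hjk hpq hqr ⟨hir, hjq, hkp⟩
    exact hP.not_three_antichain hQ hij hjk hpq hqr hir hjq hkp

theorem paths_give_face (m n i j : ℕ) (hm : 2 ≤ m) (hmn : m ≤ n)
    (Lx P Q : List (ℕ × ℕ)) (hne : (i, j) ≠ (m, n))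
    (hLx : IsPath i j m n Lx)
    (hP : IsPath 1 1 i n P) (hQ : IsPath 2 1 m j Q)
    (hdisj : ∀ v ∈ P, v ∉ Q) :
    IsFace m n
      ((Lx.toFinset.image fun p => ((true, p) : V)) ∪
        ((P.toFinset ∪ Q.toFinset).image fun p => ((false, p) : V))) :=
  paths_give_face_general m n i j Lx P Q hLx hP hQ
end

section
/- The facets of Δ_{LT(J)} are exactly the sets F = F_x ∪ F_y where F_x is a monotone lattice path from some (i,j) ≠ (m,n) to (m,n) in the x-grid and F_y is a pair of non-intersecting monotone lattice paths from (1,1), (2,1) to (i,n), (m,j) in the y-grid. -/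
theorem isChain_prod_iff {α β : Type*} [LinearOrder α] [LinearOrder β] {S : Set (α × β)} :
    IsChain (· ≤ ·) S ↔ ∀ p ∈ S, ∀ q ∈ S, p.1 < q.1 → q.2 < p.2 → False := by
  constructor
  · intro h p hp q hq h1 h2
    rcases h.total hp hq with hpq | hqp
    · exact (Prod.le_def.1 hpq).2.not_gt h2
    · exact (Prod.le_def.1 hqp).1.not_gt h1
  · intro h p hp q hq _
    by_contra! hne
    simp only [Prod.le_def, not_and, not_le] at hne
    rcases le_total p.1 q.1 with h1 | h1
    · have h2 := hne.1 h1
      exact h p hp q hq (h1.lt_of_ne fun e => (hne.2 e.ge).not_gt h2) h2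
    · have h2 := hne.2 h1
      exact h q hq p hp (h1.lt_of_ne fun e => (hne.1 e.ge).not_gt h2) h2

theorem isChain_insert_insert {α : Type*} [Preorder α] [DecidableEq α] {S : Finset α}
    {lo hi : α} (hS : IsChain (· ≤ ·) (S : Set α)) (hle : ∀ p ∈ S, lo ≤ p ∧ p ≤ hi)
    (h : lo ≤ hi) :
    IsChain (· ≤ ·) (↑(insert lo (insert hi S)) : Set α) ∧
      ∀ p ∈ insert lo (insert hi S), lo ≤ p ∧ p ≤ hi := by
  rw [Finset.coe_insert, Finset.coe_insert]
  refine ⟨(hS.insert fun p hp _ => Or.inr (hle p hp).2).insert fun p hp _ => Or.inl ?_, ?_⟩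
  · rcases hp with rfl | hp
    exacts [h, (hle p hp).1]
  · simp only [Finset.mem_insert, forall_eq_or_imp]
    exact ⟨⟨le_rfl, h⟩, ⟨h, le_rfl⟩, hle⟩

theorem IsStep.lt {p q : ℕ × ℕ} (h : IsStep p q) : p < q := by
  rcases h with rfl | rfl <;> simp [Prod.lt_iff]

theorem IsStep.swap {p q : ℕ × ℕ} (h : IsStep p q) : IsStep p.swap q.swap := by
  rcases h with rfl | rfl
  exacts [Or.inr rfl, Or.inl rfl]

namespace IsPath

variable {a b c d : ℕ} {L : List (ℕ × ℕ)}

theorem pairwise_lt (h : IsPath a b c d L) : L.Pairwise (· < ·) :=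
  (h.2.2.2.imp fun _ _ => IsStep.lt).pairwise

theorem mem_bounds (h : IsPath a b c d L) {p : ℕ × ℕ} (hp : p ∈ L) :
    a ≤ p.1 ∧ b ≤ p.2 ∧ p.1 ≤ c ∧ p.2 ≤ d := by
  have hlt := h.pairwise_lt
  obtain ⟨-, hhead, hlast, -⟩ := h
  obtain ⟨t, rfl⟩ := List.head?_eq_some_iff.1 hhead
  obtain ⟨s, hs⟩ := List.getLast?_eq_some_iff.1 hlast
  have hlo : (a, b) ≤ p := by
    rcases List.mem_cons.1 hp with rfl | hp
    · exact le_rfl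
    · exact (List.rel_of_pairwise_cons hlt hp).le
  have hhi : p ≤ (c, d) := by
    rw [hs] at hlt hp
    rcases List.mem_append.1 hp with hp | hp
    · exact ((List.pairwise_append.1 hlt).2.2 p hp _ (List.mem_singleton_self _)).le
    · rw [List.mem_singleton.1 hp]
  exact ⟨hlo.1, hlo.2, hhi.1, hhi.2⟩

theorem le (h : IsPath a b c d L) : a ≤ c ∧ b ≤ d := by
  have := h.mem_bounds (List.mem_of_mem_head? h.2.1)
  omega

theorem not_northEast (h : IsPath a b c d L) {p q : ℕ × ℕ} (hp : p ∈ L) (hq : q ∈ L) :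
    ¬(p.1 < q.1 ∧ q.2 < p.2) := by
  have : Std.Symm fun p q : ℕ × ℕ => p ≤ q ∨ q ≤ p := ⟨fun _ _ => Or.symm⟩
  have hchain : IsChain (· ≤ ·) {p | p ∈ L} :=
    (h.pairwise_lt.imp fun hpq => Or.inl hpq.le).set_pairwise
  exact fun hpq => isChain_prod_iff.1 hchain p hp q hq hpq.1 hpq.2

theorem length_add (h : IsPath a b c d L) : L.length + a + b = c + d + 1 := by
  induction L generalizing a b with
  | nil => exact absurd rfl h.1
  | cons p t ih =>
    obtain ⟨-, hhead, hlast, hchain⟩ := h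
    obtain rfl : p = (a, b) := by simpa using hhead
    cases t with
    | nil =>
      obtain ⟨rfl, rfl⟩ : a = c ∧ b = d := by simpa using hlast
      simp only [List.length_singleton]; omega
    | cons q t =>
      have hstep := (List.isChain_cons_cons.1 hchain)
      have := ih (a := q.1) (b := q.2) ⟨by simp, by simp, by simpa using hlast, hstep.2⟩
      rcases hstep.1 with rfl | rfl <;> simp only [List.length_cons] at this ⊢ <;> omega

theorem card_toFinset_s12 (h : IsPath a b c d L) : L.toFinset.card + a + b = c + d + 1 := by
  rw [List.toFinset_card_of_nodup h.pairwise_lt.nodup, h.length_add]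

theorem map_swap (h : IsPath a b c d L) : IsPath b a d c (L.map Prod.swap) := by
  obtain ⟨hne, hhead, hlast, hchain⟩ := h
  refine ⟨by simpa using hne, by simp [hhead], by simp [hlast], ?_⟩
  exact (List.isChain_map _).2 (hchain.imp fun _ _ => IsStep.swap)

end IsPath

/-- A monotone path through `α` has row `≥ α.1` on the antidiagonals `s ≥ α.1 + α.2` and
column `≤ α.2`, i.e. row `≥ s - α.2`, on the earlier ones. -/
def rowBound (s : ℕ) (α : ℕ × ℕ) : ℕ := if α.1 + α.2 ≤ s then α.1 else s - α.2

/-- The row on antidiagonal `s` of the highest monotone path through all points of `A`. -/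
def topRow (A : Finset (ℕ × ℕ)) (s : ℕ) : ℕ := A.sup (rowBound s)

section topRow

variable {A : Finset (ℕ × ℕ)}

theorem topRow_le_topRow_succ (A : Finset (ℕ × ℕ)) (s : ℕ) : topRow A s ≤ topRow A (s + 1) :=
  Finset.sup_mono_fun fun α _ => by unfold rowBound; split_ifs <;> omega

theorem topRow_succ_le (A : Finset (ℕ × ℕ)) (s : ℕ) : topRow A (s + 1) ≤ topRow A s + 1 :=
  Finset.sup_le fun α hα => (by unfold rowBound; split_ifs <;> omega :
    rowBound (s + 1) α ≤ rowBound s α + 1).trans (Nat.add_le_add_right (Finset.le_sup hα) 1)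

theorem topRow_le_sub {b : ℕ} (hb : ∀ α ∈ A, b ≤ α.2) (s : ℕ) : topRow A s ≤ s - b :=
  Finset.sup_le fun α hα => by have := hb α hα; unfold rowBound; split_ifs <;> omega

theorem topRow_of_mem (hA : IsChain (· ≤ ·) (A : Set (ℕ × ℕ))) {α : ℕ × ℕ} (hα : α ∈ A) :
    topRow A (α.1 + α.2) = α.1 := by
  refine le_antisymm (Finset.sup_le fun β hβ => ?_) ?_
  · rcases hA.total hβ hα with h | h <;> rw [Prod.le_def] at h <;>
      unfold rowBound <;> split_ifs <;> omega
  · calc α.1 = rowBound (α.1 + α.2) α := by simp [rowBound]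
      _ ≤ topRow A (α.1 + α.2) := Finset.le_sup hα

/-- For `B` the mirror image of a set `T`, this says that the highest path through `A` stays
strictly above the lowest path through `T`: the suprema are attained at some `α ∈ A` and
`β ∈ B`, and were the paths to meet on antidiagonal `s`, `α` would lie weakly south-west of the
mirror image of `β`. -/
theorem topRow_add_topRow_lt {B : Finset (ℕ × ℕ)} (hAne : A.Nonempty) (hBne : B.Nonempty)
    (hA : ∀ α ∈ A, 1 ≤ α.2) (hB : ∀ β ∈ B, 1 ≤ β.2)
    (hAB : ∀ α ∈ A, ∀ β ∈ B, β.2 ≤ α.1 → α.2 ≤ β.1 → False) {s : ℕ} (hs : 1 ≤ s) :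
    topRow A s + topRow B s < s := by
  obtain ⟨α, hα, hαs⟩ := Finset.exists_mem_eq_sup A hAne (rowBound s)
  obtain ⟨β, hβ, hβs⟩ := Finset.exists_mem_eq_sup B hBne (rowBound s)
  have : ¬(β.2 ≤ α.1 ∧ α.2 ≤ β.1) := fun h => hAB α hα β hβ h.1 h.2
  have := hA α hα
  have := hB β hβ
  rw [topRow, topRow, hαs, hβs]
  unfold rowBound
  split_ifs <;> omega

end topRow

def highPath (A : Finset (ℕ × ℕ)) (s₀ s₁ : ℕ) : List (ℕ × ℕ) :=
  (List.range' s₀ (s₁ + 1 - s₀)).map fun s => (topRow A s, s - topRow A s)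

theorem mem_highPath {A : Finset (ℕ × ℕ)} {s₀ s₁ : ℕ} {v : ℕ × ℕ} :
    v ∈ highPath A s₀ s₁ ↔ ∃ s, s₀ ≤ s ∧ s ≤ s₁ ∧ (topRow A s, s - topRow A s) = v := by
  simp only [highPath, List.mem_map, List.mem_range'_1]
  constructor
  · rintro ⟨s, ⟨h1, h2⟩, rfl⟩
    exact ⟨s, h1, by omega, rfl⟩
  · rintro ⟨s, h1, h2, rfl⟩
    exact ⟨s, ⟨h1, by omega⟩, rfl⟩

section highPath

variable {A : Finset (ℕ × ℕ)} {a b c d : ℕ}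

theorem isStep_topRow (hb : ∀ α ∈ A, b ≤ α.2) (s : ℕ) :
    IsStep (topRow A s, s - topRow A s) (topRow A (s + 1), s + 1 - topRow A (s + 1)) := by
  have := topRow_le_topRow_succ A s
  have := topRow_succ_le A s
  have := topRow_le_sub hb s
  simp only [IsStep, Prod.ext_iff]
  omega

theorem isPath_highPath (hA : IsChain (· ≤ ·) (A : Set (ℕ × ℕ))) (hab : (a, b) ∈ A)
    (hcd : (c, d) ∈ A) (hle : ∀ p ∈ A, (a, b) ≤ p ∧ p ≤ (c, d)) :
    IsPath a b c d (highPath A (a + b) (c + d)) := by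
  have hb : ∀ α ∈ A, b ≤ α.2 := fun α hα => (Prod.le_def.1 (hle α hα).1).2
  have hstart := topRow_of_mem hA hab
  have hend := topRow_of_mem hA hcd
  have hac := Prod.le_def.1 (hle (c, d) hcd).1
  simp only at hstart hend hac
  refine ⟨?_, ?_, ?_, ?_⟩
  · simp only [highPath, ne_eq, List.map_eq_nil_iff, List.range'_eq_nil_iff]
    omega
  · rw [highPath, List.head?_map, List.head?_range', if_neg (by omega), Option.map_some, hstart,
      Nat.add_sub_cancel_left]
  · rw [highPath, List.getLast?_map, List.getLast?_range', if_neg (by omega), Option.map_some,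
      show a + b + (c + d + 1 - (a + b)) - 1 = c + d by omega, hend, Nat.add_sub_cancel_left]
  · rw [highPath, List.Chain', List.isChain_map]
    exact (List.isChain_range' _ _ 1).imp fun s t (hst : t = s + 1) => hst ▸ isStep_topRow hb s

theorem mem_highPath_of_mem (hA : IsChain (· ≤ ·) (A : Set (ℕ × ℕ)))
    (hle : ∀ p ∈ A, (a, b) ≤ p ∧ p ≤ (c, d)) {p : ℕ × ℕ} (hp : p ∈ A) :
    p ∈ highPath A (a + b) (c + d) := by
  have := Prod.le_def.1 (hle p hp).1
  have := Prod.le_def.1 (hle p hp).2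
  refine mem_highPath.2 ⟨p.1 + p.2, by omega, by omega, ?_⟩
  rw [topRow_of_mem hA hp, Nat.add_sub_cancel_left]

theorem disjoint_highPath_map_swap {B : Finset (ℕ × ℕ)} {s₀ s₁ t₀ t₁ : ℕ} (hAne : A.Nonempty)
    (hBne : B.Nonempty) (hA : ∀ α ∈ A, 1 ≤ α.2) (hB : ∀ β ∈ B, 1 ≤ β.2)
    (hAB : ∀ α ∈ A, ∀ β ∈ B, β.2 ≤ α.1 → α.2 ≤ β.1 → False) (hs₀ : 1 ≤ s₀) :
    ∀ v ∈ highPath A s₀ s₁, v ∉ (highPath B t₀ t₁).map Prod.swap := by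
  intro v hv hv'
  obtain ⟨s, hs, -, rfl⟩ := mem_highPath.1 hv
  obtain ⟨w, hw, hwv⟩ := List.mem_map.1 hv'
  obtain ⟨s', -, -, rfl⟩ := mem_highPath.1 hw
  have hlt := topRow_add_topRow_lt hAne hBne hA hB hAB (hs₀.trans hs)
  have := topRow_le_sub hA s
  have := topRow_le_sub hB s'
  simp only [Prod.swap_prod_mk, Prod.ext_iff] at hwv
  obtain rfl : s' = s := by omega
  omega

theorem exists_isPath_superset {S : Finset (ℕ × ℕ)} (hS : IsChain (· ≤ ·) (S : Set (ℕ × ℕ)))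
    (hle : ∀ p ∈ S, (a, b) ≤ p ∧ p ≤ (c, d)) (hac : (a, b) ≤ (c, d)) :
    ∃ L, IsPath a b c d L ∧ ∀ p ∈ S, p ∈ L := by
  obtain ⟨hA, hAle⟩ := isChain_insert_insert hS hle hac
  exact ⟨_, isPath_highPath hA (Finset.mem_insert_self _ _)
    (Finset.mem_insert_of_mem (Finset.mem_insert_self _ _)) hAle, fun p hp =>
    mem_highPath_of_mem hA hAle (Finset.mem_insert_of_mem (Finset.mem_insert_of_mem hp))⟩

/-- The lower path is the mirror image of the highest path through the mirrored set, i.e. the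
lowest path through `T ∪ {(a', b'), (c', d')}`. -/
theorem exists_disjoint_isPath_superset {S T : Finset (ℕ × ℕ)} {a' b' c' d' : ℕ}
    (hS : IsChain (· ≤ ·) (S : Set (ℕ × ℕ))) (hSle : ∀ p ∈ S, (a, b) ≤ p ∧ p ≤ (c, d))
    (hac : (a, b) ≤ (c, d))
    (hT : IsChain (· ≤ ·) (T : Set (ℕ × ℕ))) (hTle : ∀ p ∈ T, (a', b') ≤ p ∧ p ≤ (c', d'))
    (hac' : (a', b') ≤ (c', d')) (hb : 1 ≤ b) (ha' : 1 ≤ a')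
    (hST : ∀ α ∈ insert (a, b) (insert (c, d) S), ∀ β ∈ insert (a', b') (insert (c', d') T),
      β.1 ≤ α.1 → α.2 ≤ β.2 → False) :
    ∃ P Q, IsPath a b c d P ∧ IsPath a' b' c' d' Q ∧ (∀ v ∈ P, v ∉ Q) ∧
      (∀ p ∈ S, p ∈ P) ∧ ∀ p ∈ T, p ∈ Q := by
  set A := insert (a, b) (insert (c, d) S)
  obtain ⟨hA, hAle⟩ := isChain_insert_insert hS hSle hac
  set B' := (insert (a', b') (insert (c', d') T)).image Prod.swap
  obtain ⟨hB, hBle⟩ := isChain_insert_insert hT hTle hac'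
  have hB' : IsChain (· ≤ ·) (B' : Set (ℕ × ℕ)) := by
    rw [Finset.coe_image]
    exact hB.image_of_map_rel _ _ _ fun _ _ => Prod.swap_le_swap.2
  have hB'le : ∀ p ∈ B', (b', a') ≤ p ∧ p ≤ (d', c') := by
    simp only [B', Finset.mem_image]
    rintro _ ⟨p, hp, rfl⟩
    exact ⟨Prod.swap_le_swap.2 (hBle p hp).1, Prod.swap_le_swap.2 (hBle p hp).2⟩
  have mem_A : ∀ {p}, p ∈ S → p ∈ A := fun hp =>
    Finset.mem_insert_of_mem (Finset.mem_insert_of_mem hp)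
  have mem_B' : ∀ {p}, p ∈ insert (a', b') (insert (c', d') T) → p.swap ∈ B' :=
    Finset.mem_image_of_mem _
  refine ⟨highPath A (a + b) (c + d), (highPath B' (b' + a') (d' + c')).map Prod.swap,
    isPath_highPath hA (Finset.mem_insert_self _ _)
      (Finset.mem_insert_of_mem (Finset.mem_insert_self _ _)) hAle,
    (isPath_highPath hB' (mem_B' (Finset.mem_insert_self _ _))
      (mem_B' (Finset.mem_insert_of_mem (Finset.mem_insert_self _ _))) hB'le).map_swap,
    disjoint_highPath_map_swap ⟨_, Finset.mem_insert_self _ _⟩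
      ⟨_, mem_B' (Finset.mem_insert_self _ _)⟩
      (fun α hα => hb.trans (Prod.le_def.1 (hAle α hα).1).2)
      (fun β hβ => ha'.trans (Prod.le_def.1 (hB'le β hβ).1).2)
      (by simp only [B', Finset.mem_image]; rintro α hα _ ⟨β, hβ, rfl⟩; exact hST α hα β hβ)
      (by omega),
    fun p hp => mem_highPath_of_mem hA hAle (mem_A hp), fun p hp => ?_⟩
  exact List.mem_map.2 ⟨p.swap, mem_highPath_of_mem hB' hB'le
    (mem_B' (Finset.mem_insert_of_mem (Finset.mem_insert_of_mem hp))), Prod.swap_swap p⟩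

end highPath

def pathFacet (Lx P Q : List (ℕ × ℕ)) : Finset V :=
  (Lx.toFinset.image fun p => ((true, p) : V)) ∪
    ((P.toFinset ∪ Q.toFinset).image fun p => ((false, p) : V))

section pathFacet

variable {Lx P Q : List (ℕ × ℕ)}

@[simp]
theorem mem_pathFacet_true {p : ℕ × ℕ} : ((true, p) : V) ∈ pathFacet Lx P Q ↔ p ∈ Lx := by
  simp [pathFacet]

@[simp]
theorem mem_pathFacet_false {p : ℕ × ℕ} :
    ((false, p) : V) ∈ pathFacet Lx P Q ↔ p ∈ P ∨ p ∈ Q := by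
  simp [pathFacet]

theorem isFace_pathFacet {m n a b : ℕ} (ha : 1 ≤ a) (hb : 1 ≤ b)
    (hLx : IsPath a b m n Lx) (hP : IsPath 1 1 a n P) (hQ : IsPath 2 1 m b Q) :
    IsFace m n (pathFacet Lx P Q) := by
  have onP : ∀ {p}, ((false, p) : V) ∈ pathFacet Lx P Q → b < p.2 → p ∈ P := fun hp hbp =>
    (mem_pathFacet_false.1 hp).resolve_right fun hq => by have := hQ.mem_bounds hq; omega
  have onQ : ∀ {p}, ((false, p) : V) ∈ pathFacet Lx P Q → a < p.1 → p ∈ Q := fun hp hap =>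
    (mem_pathFacet_false.1 hp).resolve_left fun hp => by have := hP.mem_bounds hp; omega
  refine ⟨?_, ?_, ?_, ?_, ?_, ?_⟩
  · have := hLx.le
    rintro ⟨_ | _, p⟩ hp <;> simp only [InGrid]
    · rcases mem_pathFacet_false.1 hp with hp | hp
      · have := hP.mem_bounds hp; omega
      · have := hQ.mem_bounds hp; omega
    · have := hLx.mem_bounds (mem_pathFacet_true.1 hp); omega
  · intro i j k l hij hkl ⟨h1, h2⟩
    exact hLx.not_northEast (mem_pathFacet_true.1 h1) (mem_pathFacet_true.1 h2) ⟨hij, hkl⟩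
  · intro i j k l hij hkl ⟨h1, h2⟩
    have := hLx.mem_bounds (mem_pathFacet_true.1 h1)
    have := hQ.mem_bounds (onQ h2 (by simp only at *; omega))
    simp only at *; omega
  · intro i j k p q r hij hjk hpq hqr ⟨h1, h2, h3⟩
    have := hLx.mem_bounds (mem_pathFacet_true.1 h1)
    simp only at *
    exact hP.not_northEast (onP h3 (by omega)) (onP h2 (by omega)) ⟨hij, hqr⟩
  · intro i j k p q r hij hjk hpq hqr ⟨h1, h2, h3⟩
    have := hLx.mem_bounds (mem_pathFacet_true.1 h1)
    simp only at *
    exact hQ.not_northEast (onQ h2 (by omega)) (onQ h3 (by omega)) ⟨hjk, hpq⟩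
  · -- two of the three points lie on the same path
    intro i j k p q r hij hjk hpq hqr ⟨h1, h2, h3⟩
    rcases mem_pathFacet_false.1 h1 with h1 | h1 <;>
      rcases mem_pathFacet_false.1 h2 with h2 | h2 <;>
      rcases mem_pathFacet_false.1 h3 with h3 | h3 <;>
      first
        | exact hP.not_northEast h1 h2 ⟨hij, hqr⟩ | exact hQ.not_northEast h1 h2 ⟨hij, hqr⟩
        | exact hP.not_northEast h2 h3 ⟨hjk, hpq⟩ | exact hQ.not_northEast h2 h3 ⟨hjk, hpq⟩
        | exact hP.not_northEast h1 h3 ⟨hij.trans hjk, hpq.trans hqr⟩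
        | exact hQ.not_northEast h1 h3 ⟨hij.trans hjk, hpq.trans hqr⟩

theorem card_pathFacet {m n a b : ℕ} (hPQ : ∀ v ∈ P, v ∉ Q)
    (hLx : IsPath a b m n Lx) (hP : IsPath 1 1 a n P) (hQ : IsPath 2 1 m b Q) :
    (pathFacet Lx P Q).card + 2 = 2 * (m + n) := by
  have hx := hLx.card_toFinset_s12
  have hp := hP.card_toFinset_s12
  have hq := hQ.card_toFinset_s12
  rw [pathFacet, Finset.card_union_of_disjoint,
    Finset.card_image_of_injective _ (Prod.mk_right_injective _),
    Finset.card_image_of_injective _ (Prod.mk_right_injective _), Finset.card_union_of_disjoint]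
  · omega
  · exact Finset.disjoint_left.2 fun v hvP hvQ =>
      hPQ v (List.mem_toFinset.1 hvP) (List.mem_toFinset.1 hvQ)
  · simp [Finset.disjoint_left]

end pathFacet

noncomputable def layer (c : Bool) (F : Finset V) : Finset (ℕ × ℕ) :=
  F.preimage (Prod.mk c) (Prod.mk_right_injective c).injOn

@[simp]
theorem mem_layer {c : Bool} {F : Finset V} {p : ℕ × ℕ} : p ∈ layer c F ↔ (c, p) ∈ F :=
  Finset.mem_preimage

/-- `(a, b)` is where the x-path of a facet containing `F` starts; its y-paths end at `(a, n)`
and `(m, b)`. -/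
structure IsXStart (m n : ℕ) (F : Finset V) (a b : ℕ) : Prop where
  one_le_fst : 1 ≤ a
  fst_le : a ≤ m
  one_le_snd : 1 ≤ b
  snd_le : b ≤ n
  ne : (a, b) ≠ (m, n)
  le_of_mem_x : ∀ z, (true, z) ∈ F → (a, b) ≤ z
  snd_le_of_mem_y : ∀ y, (false, y) ∈ F →
    (a < y.1 ∨ ∃ u, (false, u) ∈ F ∧ u.1 < y.1 ∧ y.2 < u.2) → y.2 ≤ b
  not_northEast_y : ∀ u v, (false, u) ∈ F → (false, v) ∈ F → a < u.1 → ¬(u.1 < v.1 ∧ v.2 < u.2)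

section corner

variable {m n : ℕ} {F : Finset V}

theorem isXStart_of_forall_x_eq (hF : IsFace m n F) (hm : 1 ≤ m) (hn : 2 ≤ n)
    (hx : ∀ z, (true, z) ∈ F → z = (m, n)) : IsXStart m n F m (n - 1) where
  one_le_fst := hm
  fst_le := le_rfl
  one_le_snd := by omega
  snd_le := by omega
  ne h := by simp only [Prod.mk.injEq] at h; omega
  le_of_mem_x z hz := by rw [hx z hz]; exact Prod.mk_le_mk.2 ⟨le_rfl, by omega⟩
  snd_le_of_mem_y y hy := by
    have := hF.1 _ hy
    rintro (h | ⟨u, hu, -, h⟩)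
    · simp only [InGrid] at this; omega
    · have := hF.1 _ hu; simp only [InGrid] at *; omega
  not_northEast_y u v hu hv h := by have := hF.1 _ hu; simp only [InGrid] at this; omega

theorem isXStart_of_isLeast (hF : IsFace m n F) {z₀ : ℕ × ℕ} (hz₀ : (true, z₀) ∈ F)
    (hle : ∀ z, (true, z) ∈ F → z₀ ≤ z) (hne : z₀ ≠ (m, n)) : IsXStart m n F z₀.1 z₀.2 := by
  obtain ⟨hgrid, -, hB, hC, hD, -⟩ := hF
  have hz := hgrid _ hz₀
  simp only [InGrid] at hz
  have below : ∀ y, (false, y) ∈ F → z₀.1 < y.1 → y.2 ≤ z₀.2 := fun y hy h1 =>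
    not_lt.1 fun h2 => hB _ _ _ _ h1 h2 ⟨hz₀, hy⟩
  refine ⟨hz.1, hz.2.1, hz.2.2.1, hz.2.2.2, hne, hle, fun y hy => ?_, ?_⟩
  · rintro (h | ⟨u, hu, hu1, hu2⟩)
    · exact below y hy h
    · by_contra! h
      rcases lt_or_ge z₀.1 y.1 with h' | h'
      · exact h.not_ge (below y hy h')
      · exact hC _ _ _ _ _ _ hu1 h' h hu2 ⟨hz₀, hy, hu⟩
  · rintro u v hu hv h ⟨huv, hvu⟩
    exact hD _ _ _ _ _ _ h huv hvu (below u hu h) ⟨hz₀, hu, hv⟩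

theorem exists_isXStart (hm : 2 ≤ m) (hmn : m ≤ n) (hF : IsFace m n F) :
    ∃ a b, IsXStart m n F a b := by
  by_cases hx : ∀ z, (true, z) ∈ F → z = (m, n)
  · exact ⟨m, n - 1, isXStart_of_forall_x_eq hF (by omega) (by omega) hx⟩
  push Not at hx
  obtain ⟨z₁, hz₁, hne⟩ := hx
  obtain ⟨z₀, hz₀, hmin⟩ :=
    (layer true F).exists_min_image (fun z => z.1 + z.2) ⟨z₁, mem_layer.2 hz₁⟩
  rw [mem_layer] at hz₀
  -- the x-vertices form a chain, so the one of least coordinate sum is the least one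
  have hle : ∀ z, (true, z) ∈ F → z₀ ≤ z := by
    intro z hz
    have := hmin z (mem_layer.2 hz)
    rw [Prod.le_def]
    by_contra! h
    rcases lt_or_ge z₀.1 z.1 with h1 | h1
    · exact hF.2.1 _ _ _ _ h1 (by omega) ⟨hz₀, hz⟩
    · exact hF.2.1 _ _ _ _ (by omega) (by omega) ⟨hz, hz₀⟩
  refine ⟨z₀.1, z₀.2, isXStart_of_isLeast hF hz₀ hle fun h => hne ?_⟩
  have := hF.1 _ hz₁
  have := Prod.le_def.1 (hle z₁ hz₁)
  simp only [InGrid, h] at *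
  ext <;> omega

end corner

/-- The y-vertices that have to lie on the lower path `Q` of a facet containing `F` with
x-path starting at `(a, b)`; all other y-vertices go on the upper path `P`. -/
def ForcedLow (m a b : ℕ) (F : Finset V) (y : ℕ × ℕ) : Prop :=
  a < y.1 ∨ (2 ≤ y.1 ∧ y.2 ≤ 1) ∨ (m ≤ y.1 ∧ y.2 ≤ b) ∨
    ∃ u, (false, u) ∈ F ∧ u.1 < y.1 ∧ y.2 < u.2

namespace ForcedLow

variable {m n a b : ℕ} {F : Finset V} {α β : ℕ × ℕ}

theorem of_southWest (h : ForcedLow m a b F β) (h1 : β.1 ≤ α.1) (h2 : α.2 ≤ β.2) :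
    ForcedLow m a b F α := by
  rcases h with h | h | h | ⟨u, hu, hu1, hu2⟩
  · exact Or.inl (by omega)
  · exact Or.inr (Or.inl (by omega))
  · exact Or.inr (Or.inr (Or.inl (by omega)))
  · exact Or.inr (Or.inr (Or.inr ⟨u, hu, by omega, by omega⟩))

theorem not_of_fst_le_of_le_snd (hF : IsFace m n F) (hs : IsXStart m n F a b) (hn : 2 ≤ n)
    (h1 : β.1 ≤ a) (h2 : n ≤ β.2) : ¬ForcedLow m a b F β := by
  rintro (h | h | h | ⟨u, hu, -, hu2⟩)
  · omega
  · omega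
  · exact hs.ne (Prod.ext (by have := hs.fst_le; omega) (by have := hs.snd_le; omega))
  · have := hF.1 _ hu; simp only [InGrid] at this; omega

end ForcedLow

open Classical in
noncomputable def yUpper (m a b : ℕ) (F : Finset V) : Finset (ℕ × ℕ) :=
  (layer false F).filter fun y => ¬ForcedLow m a b F y

open Classical in
noncomputable def yLower (m a b : ℕ) (F : Finset V) : Finset (ℕ × ℕ) :=
  (layer false F).filter (ForcedLow m a b F)

section yAnchors

variable {m n a b : ℕ} {F : Finset V} {y : ℕ × ℕ}

@[simp]
theorem mem_yUpper : y ∈ yUpper m a b F ↔ (false, y) ∈ F ∧ ¬ForcedLow m a b F y := by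
  simp [yUpper]

@[simp]
theorem mem_yLower : y ∈ yLower m a b F ↔ (false, y) ∈ F ∧ ForcedLow m a b F y := by
  simp [yLower]

theorem isChain_yUpper : IsChain (· ≤ ·) (yUpper m a b F : Set (ℕ × ℕ)) :=
  isChain_prod_iff.2 fun p hp _ hq h1 h2 =>
    (mem_yUpper.1 hq).2 (Or.inr (Or.inr (Or.inr ⟨p, (mem_yUpper.1 hp).1, h1, h2⟩)))

theorem yUpper_bounds (hF : IsFace m n F) : ∀ y ∈ yUpper m a b F, (1, 1) ≤ y ∧ y ≤ (a, n) := by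
  intro y hy
  obtain ⟨hy, hlow⟩ := mem_yUpper.1 hy
  have := hF.1 _ hy
  have : ¬a < y.1 := fun h => hlow (Or.inl h)
  simp only [InGrid, Prod.le_def] at *
  omega

theorem isChain_yLower (hF : IsFace m n F) (hs : IsXStart m n F a b) :
    IsChain (· ≤ ·) (yLower m a b F : Set (ℕ × ℕ)) := by
  refine isChain_prod_iff.2 fun p hp q hq h1 h2 => ?_
  obtain ⟨hp, hlow⟩ := mem_yLower.1 hp
  obtain ⟨hq, -⟩ := mem_yLower.1 hq
  have := hF.1 _ hq
  simp only [InGrid] at this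
  rcases hlow with h | h | h | ⟨u, hu, hu1, hu2⟩
  · exact hs.not_northEast_y p q hp hq h ⟨h1, h2⟩
  · omega
  · omega
  · exact hF.2.2.2.2.2 _ _ _ _ _ _ hu1 h1 h2 hu2 ⟨hu, hp, hq⟩

theorem yLower_bounds (hm : 2 ≤ m) (hF : IsFace m n F) (hs : IsXStart m n F a b) :
    ∀ y ∈ yLower m a b F, (2, 1) ≤ y ∧ y ≤ (m, b) := by
  intro y hy
  obtain ⟨hy, hlow⟩ := mem_yLower.1 hy
  have hgrid := hF.1 _ hy
  simp only [InGrid, Prod.le_def] at hgrid ⊢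
  rcases hlow with h | h | h | ⟨u, hu, hu1, hu2⟩
  · have := hs.snd_le_of_mem_y y hy (Or.inl h); have := hs.one_le_fst; omega
  · have := hs.one_le_snd; omega
  · omega
  · have := hs.snd_le_of_mem_y y hy (Or.inr ⟨u, hu, hu1, hu2⟩); have := hF.1 _ hu
    simp only [InGrid] at this; omega

/-- Every point of the lower set is forced low, and forced-low points are closed under moving
weakly south-west. -/
theorem yUpper_not_southWest_yLower (hm : 2 ≤ m) (hn : 2 ≤ n) (hF : IsFace m n F)
    (hs : IsXStart m n F a b) :
    ∀ α ∈ insert (1, 1) (insert (a, n) (yUpper m a b F)),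
      ∀ β ∈ insert (2, 1) (insert (m, b) (yLower m a b F)), β.1 ≤ α.1 → α.2 ≤ β.2 → False := by
  intro α hα β hβ h1 h2
  have hβlow : ForcedLow m a b F β ∧ 2 ≤ β.1 := by
    simp only [Finset.mem_insert] at hβ
    rcases hβ with rfl | rfl | hβ
    · exact ⟨Or.inr (Or.inl ⟨le_rfl, le_rfl⟩), le_rfl⟩
    · exact ⟨Or.inr (Or.inr (Or.inl ⟨le_rfl, le_rfl⟩)), hm⟩
    · exact ⟨(mem_yLower.1 hβ).2, (Prod.mk_le_mk.1 (yLower_bounds hm hF hs β hβ).1).1⟩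
  simp only [Finset.mem_insert, mem_yUpper] at hα
  rcases hα with rfl | rfl | hα
  · simp only at h1; omega
  · exact ForcedLow.not_of_fst_le_of_le_snd hF hs hn h1 h2 hβlow.1
  · exact hα.2 (hβlow.1.of_southWest h1 h2)

end yAnchors

section construction

variable {m n a b : ℕ} {F : Finset V}

theorem exists_xPath (hF : IsFace m n F) (hs : IsXStart m n F a b) :
    ∃ Lx, IsPath a b m n Lx ∧ ∀ z, (true, z) ∈ F → z ∈ Lx := by
  have hX : IsChain (· ≤ ·) (↑(layer true F) : Set (ℕ × ℕ)) :=
    isChain_prod_iff.2 fun p hp _ hq h1 h2 => hF.2.1 _ _ _ _ h1 h2 ⟨mem_layer.1 hp, mem_layer.1 hq⟩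
  have hle : ∀ z ∈ layer true F, (a, b) ≤ z ∧ z ≤ (m, n) := fun z hz => by
    rw [mem_layer] at hz
    have := hF.1 _ hz
    exact ⟨hs.le_of_mem_x z hz, Prod.mk_le_mk.2 ⟨this.2.1, this.2.2.2⟩⟩
  obtain ⟨Lx, hLx, hmem⟩ :=
    exists_isPath_superset hX hle (Prod.mk_le_mk.2 ⟨hs.fst_le, hs.snd_le⟩)
  exact ⟨Lx, hLx, fun z hz => hmem z (mem_layer.2 hz)⟩

theorem exists_yPaths (hm : 2 ≤ m) (hn : 2 ≤ n) (hF : IsFace m n F) (hs : IsXStart m n F a b) :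
    ∃ P Q, IsPath 1 1 a n P ∧ IsPath 2 1 m b Q ∧ (∀ v ∈ P, v ∉ Q) ∧
      ∀ y, (false, y) ∈ F → y ∈ P ∨ y ∈ Q := by
  obtain ⟨P, Q, hP, hQ, hPQ, hYP, hYQ⟩ := exists_disjoint_isPath_superset isChain_yUpper
    (yUpper_bounds hF) (Prod.mk_le_mk.2 ⟨hs.one_le_fst, by omega⟩) (isChain_yLower hF hs)
    (yLower_bounds hm hF hs) (Prod.mk_le_mk.2 ⟨hm, hs.one_le_snd⟩) le_rfl (by omega)
    (yUpper_not_southWest_yLower hm hn hF hs)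
  refine ⟨P, Q, hP, hQ, hPQ, fun y hy => ?_⟩
  by_cases h : ForcedLow m a b F y
  · exact Or.inr (hYQ y (mem_yLower.2 ⟨hy, h⟩))
  · exact Or.inl (hYP y (mem_yUpper.2 ⟨hy, h⟩))

theorem exists_pathFacet_superset (hm : 2 ≤ m) (hmn : m ≤ n) (hF : IsFace m n F) :
    ∃ (a b : ℕ) (Lx P Q : List (ℕ × ℕ)),
      1 ≤ a ∧ a ≤ m ∧ 1 ≤ b ∧ b ≤ n ∧ (a, b) ≠ (m, n) ∧
      IsPath a b m n Lx ∧ IsPath 1 1 a n P ∧ IsPath 2 1 m b Q ∧ (∀ v ∈ P, v ∉ Q) ∧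
      F ⊆ pathFacet Lx P Q := by
  obtain ⟨a, b, hs⟩ := exists_isXStart hm hmn hF
  obtain ⟨Lx, hLx, hx⟩ := exists_xPath hF hs
  obtain ⟨P, Q, hP, hQ, hPQ, hy⟩ := exists_yPaths hm (hm.trans hmn) hF hs
  refine ⟨a, b, Lx, P, Q, hs.one_le_fst, hs.fst_le, hs.one_le_snd, hs.snd_le, hs.ne,
    hLx, hP, hQ, hPQ, ?_⟩
  rintro ⟨_ | _, p⟩ hp
  · exact mem_pathFacet_false.2 (hy p hp)
  · exact mem_pathFacet_true.2 (hx p hp)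

end construction

theorem facet_characterization (m n : ℕ) (hm : 2 ≤ m) (hmn : m ≤ n) (F : Finset V) :
    IsFacet m n F ↔
      ∃ (i j : ℕ) (Lx P Q : List (ℕ × ℕ)),
        1 ≤ i ∧ i ≤ m ∧ 1 ≤ j ∧ j ≤ n ∧ (i, j) ≠ (m, n) ∧
        IsPath i j m n Lx ∧ IsPath 1 1 i n P ∧ IsPath 2 1 m j Q ∧
        (∀ v ∈ P, v ∉ Q) ∧
        F = (Lx.toFinset.image fun p => ((true, p) : V)) ∪
              ((P.toFinset ∪ Q.toFinset).image fun p => ((false, p) : V)) := by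
  constructor
  · rintro ⟨hF, hmax⟩
    obtain ⟨i, j, Lx, P, Q, hi, him, hj, hjn, hne, hLx, hP, hQ, hPQ, hsub⟩ :=
      exists_pathFacet_superset hm hmn hF
    exact ⟨i, j, Lx, P, Q, hi, him, hj, hjn, hne, hLx, hP, hQ, hPQ,
      hmax _ (isFace_pathFacet hi hj hLx hP hQ) hsub⟩
  · rintro ⟨i, j, Lx, P, Q, hi, -, hj, -, -, hLx, hP, hQ, hPQ, rfl⟩
    refine ⟨isFace_pathFacet hi hj hLx hP hQ, fun G hG hsub => ?_⟩
    obtain ⟨_, _, Lx', P', Q', -, -, -, -, -, hLx', hP', hQ', hPQ', hsub'⟩ :=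
      exists_pathFacet_superset hm hmn hG
    refine Finset.eq_of_subset_of_card_le hsub ((Finset.card_le_card hsub').trans ?_)
    have := card_pathFacet hPQ hLx hP hQ
    have := card_pathFacet hPQ' hLx' hP' hQ'
    change _ ≤ (pathFacet Lx P Q).card
    omega
end
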